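/- arXiv:1608.01589 — 8 statements merged into one kernel-verified Lean document; each statement's English description precedes it below -/
import Mathlib

section
/- There exist real constants c > 0 and C > 0 such that for every integer n ≥ 3, c·n·log n ≤ χ(CG(n)) ≤ χ(KG(n)) ≤ C·n·log n. In particular, the chromatic numbers of the total cyclic interval graph CG(n) and of the total Kneser graph KG(n) are both Θ(n log n). -/
/-- A partition of `{0,…,n-1}` (modeled as `Fin n`) into an unordered pair of nonempty
disjoint subsets covering everything, modeled as a 2-element finset of parts. -/
def TKPart (n : ℕ) (P : Finset (Finset (Fin n))) : Prop :=
  P.card = 2 ∧ (∀ A ∈ P, A.Nonempty) ∧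
    (∀ A ∈ P, ∀ B ∈ P, A ≠ B → Disjoint A B) ∧ P.sup id = Finset.univ

/-- Vertices of the total Kneser graph. -/
abbrev TKVert (n : ℕ) := {P : Finset (Finset (Fin n)) // TKPart n P}

/-- The total Kneser graph `KG(n)`: two distinct partitions are adjacent iff they are
nested, i.e. some part of one is contained in some part of the other. -/
def KG (n : ℕ) : SimpleGraph (TKVert n) where
  Adj P Q := P ≠ Q ∧
    ((∃ A ∈ P.1, ∃ C ∈ Q.1, A ⊆ C) ∨ (∃ C ∈ Q.1, ∃ A ∈ P.1, C ⊆ A))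
  symm := by
    refine ⟨?_⟩
    rintro P Q ⟨hne, h⟩
    refine ⟨hne.symm, ?_⟩
    rcases h with ⟨A, hA, C, hC, hAC⟩ | ⟨C, hC, A, hA, hCA⟩
    · exact Or.inr ⟨A, hA, C, hC, hAC⟩
    · exact Or.inl ⟨C, hC, A, hA, hCA⟩
  loopless := ⟨fun P h => h.1 rfl⟩

/-- `A ⊆ Fin n` is a cyclic interval `{i, i+1, …, i+k-1} (mod n)` with `1 ≤ k ≤ n-1`. -/
def IsCyclicInterval {n : ℕ} (A : Finset (Fin n)) : Prop :=
  ∃ i k : ℕ, 1 ≤ k ∧ k ≤ n - 1 ∧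
    (↑A : Set (Fin n)) = {x : Fin n | ∃ j < k, (x : ℕ) = (i + j) % n}

/-- The vertices of the total cyclic interval graph: partitions both of whose parts are
cyclic intervals. -/
def CGSet (n : ℕ) : Set (TKVert n) := {P | ∀ A ∈ P.1, IsCyclicInterval A}

/-- The total cyclic interval graph `CG(n)`, the induced subgraph of `KG(n)` on partitions
into cyclic intervals. -/
def CG (n : ℕ) : SimpleGraph (CGSet n) := (KG n).induce (CGSet n)

/-!
Upper bound: a partition whose smaller part `A` satisfies `2|A| < n` gets the colour
`(⌊log₂ |A|⌋, x_A)`, where `x_A` is the element of `A` of rank `2^(⌊log₂ |A|⌋ + 1) - 1 - |A|`;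
all balanced partitions get one extra colour. If `A ⊊ C` lie on the same dyadic level, the rank
used for `C` is smaller, while the `j`-th element of `C` is at most the `j`-th element of `A`,
so `x_C < x_A`; and disjoint small parts cannot share `x`.

Lower bound: weight each cyclic partition by the inverse size of its smaller part. An independent
set of `CG(n)` containing a partition with part `[p, q)` has at most `q - p` members: every member
crosses `[p, q)` and so has an endpoint in it, and two partitions sharing an endpoint are nested.
So every colour class has weight at most `1`, whereas the total weight is at least
`n · H_⌊(n-1)/2⌋ ≥ n log n / 4`.
-/

open Finset

namespace SimpleGraph

variable {V : Type*} [Fintype V] {G : SimpleGraph V}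
  {K : Type*} [Field K] [LinearOrder K] [IsStrictOrderedRing K]

theorem sum_inv_le_of_colorable (w : V → ℕ)
    (hw : ∀ s : Finset V, G.IsIndepSet s → ∀ v ∈ s, #s ≤ w v) {m : ℕ} (hG : G.Colorable m) :
    ∑ v, (w v : K)⁻¹ ≤ m := by
  classical
  obtain ⟨C⟩ := hG
  have hclass (c : Fin m) : ∑ v with C v = c, (w v : K)⁻¹ ≤ 1 := by
    set s : Finset V := {v | C v = c}
    have hs : G.IsIndepSet s := by
      simpa [s, Coloring.colorClass] using C.isIndepSet_colorClass c
    calc ∑ v ∈ s, (w v : K)⁻¹ ≤ ∑ _v ∈ s, (#s : K)⁻¹ :=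
          sum_le_sum fun v hv => inv_anti₀ (by exact_mod_cast card_pos.2 ⟨v, hv⟩)
            (by exact_mod_cast hw s hs v hv)
      _ ≤ 1 := by rw [sum_const, nsmul_eq_mul]; exact mul_inv_le_one
  calc ∑ v, (w v : K)⁻¹ = ∑ c, ∑ v with C v = c, (w v : K)⁻¹ := (sum_fiberwise _ _ _).symm
    _ ≤ ∑ _c : Fin m, 1 := sum_le_sum fun c _ => hclass c
    _ = m := by simp

end SimpleGraph

section Pivot

variable {α : Type*} [LinearOrder α]

def pivotRank (k : ℕ) : ℕ := 2 ^ (Nat.log 2 k + 1) - 1 - k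

lemma pivotRank_lt {k : ℕ} (hk : k ≠ 0) : pivotRank k < k := by
  have := Nat.pow_log_le_self 2 hk
  rw [pivotRank, pow_succ]
  omega

lemma pivotRank_lt_pivotRank {j k : ℕ} (hjk : j < k) (hlog : Nat.log 2 j = Nat.log 2 k) :
    pivotRank k < pivotRank j := by
  have := Nat.lt_pow_succ_log_self one_lt_two k
  rw [pivotRank, pivotRank, hlog]
  omega

lemma orderEmbOfFin_le_of_subset {A C : Finset α} (hAC : A ⊆ C) {j : ℕ} (hjA : j < #A)
    (hjC : j < #C) : C.orderEmbOfFin rfl ⟨j, hjC⟩ ≤ A.orderEmbOfFin rfl ⟨j, hjA⟩ := by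
  by_contra! hlt
  -- the first `j + 1` elements of `A` would be elements of `C` below its `j`-th one
  have hsub : (Iic (⟨j, hjA⟩ : Fin #A)).map (A.orderEmbOfFin rfl).toEmbedding ⊆
      (Iio (⟨j, hjC⟩ : Fin #C)).map (C.orderEmbOfFin rfl).toEmbedding := by
    intro x hx
    obtain ⟨i, hi, rfl⟩ := mem_map.1 hx
    have hiC : A.orderEmbOfFin rfl i ∈ Set.range (C.orderEmbOfFin rfl) := by
      rw [range_orderEmbOfFin]
      exact hAC (orderEmbOfFin_mem A rfl i)
    obtain ⟨k, hk⟩ := hiC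
    refine mem_map.2 ⟨k, mem_Iio.2 ?_, hk⟩
    rw [← (C.orderEmbOfFin rfl).lt_iff_lt, hk]
    exact ((A.orderEmbOfFin rfl).monotone (mem_Iic.1 hi)).trans_lt hlt
  simpa using card_le_card hsub

def pivot (A : Finset α) (hA : A.Nonempty) : α :=
  A.orderEmbOfFin rfl ⟨pivotRank #A, pivotRank_lt hA.card_pos.ne'⟩

lemma pivot_mem {A : Finset α} (hA : A.Nonempty) : pivot A hA ∈ A :=
  orderEmbOfFin_mem A rfl _

lemma pivot_lt_pivot_of_ssubset {A C : Finset α} (hA : A.Nonempty) (hAC : A ⊂ C)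
    (hlog : Nat.log 2 #A = Nat.log 2 #C) :
    pivot C (hA.mono hAC.subset) < pivot A hA := by
  have hcard : #A < #C := card_lt_card hAC
  have hidx := pivotRank_lt_pivotRank hcard hlog
  have hidxC : pivotRank #A < #C := (pivotRank_lt hA.card_pos.ne').trans hcard
  calc pivot C _ < C.orderEmbOfFin rfl ⟨pivotRank #A, hidxC⟩ :=
        (C.orderEmbOfFin rfl).strictMono (Fin.mk_lt_mk.2 hidx)
    _ ≤ pivot A hA := orderEmbOfFin_le_of_subset hAC.subset _ _

end Pivot

section SmallColor

variable {α : Type*} [Fintype α] [LinearOrder α]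

def smallColor (A : Finset α) (hA : A.Nonempty) : Fin (Nat.log 2 (Fintype.card α) + 1) × α :=
  (⟨Nat.log 2 #A, Nat.lt_succ_of_le (Nat.log_mono_right (card_le_univ A))⟩, pivot A hA)

lemma smallColor_ne_of_ssubset {A C : Finset α} (hA : A.Nonempty) (hAC : A ⊂ C) :
    smallColor A hA ≠ smallColor C (hA.mono hAC.subset) := by
  intro h
  have hlog : Nat.log 2 #A = Nat.log 2 #C := congrArg (fun c => c.1.val) h
  exact (pivot_lt_pivot_of_ssubset hA hAC hlog).ne (congrArg Prod.snd h).symm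

lemma smallColor_ne_of_disjoint {A C : Finset α} (hA : A.Nonempty) (hC : C.Nonempty)
    (hAC : Disjoint A C) : smallColor A hA ≠ smallColor C hC := by
  intro h
  have hpivot : pivot A hA = pivot C hC := congrArg Prod.snd h
  exact disjoint_left.1 hAC (pivot_mem hA) (hpivot ▸ pivot_mem hC)

lemma nested_of_two_mul_card_lt {A C : Finset α} (hA : 2 * #A < Fintype.card α)
    (hC : 2 * #C < Fintype.card α) (X Y : Finset α) (hX : X = A ∨ X = Aᶜ) (hY : Y = C ∨ Y = Cᶜ)
    (hXY : X ⊆ Y ∨ Y ⊆ X) : A ⊆ C ∨ C ⊆ A ∨ Disjoint A C := by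
  have hA' := card_compl A
  have hC' := card_compl C
  rcases hX with rfl | rfl <;> rcases hY with rfl | rfl <;> rcases hXY with h | h
  · exact Or.inl h
  · exact Or.inr (Or.inl h)
  · exact Or.inr (Or.inr (disjoint_left.2 fun a ha haC => mem_compl.1 (h ha) haC))
  · exact absurd (card_le_card h) (by omega)
  · exact absurd (card_le_card h) (by omega)
  · exact Or.inr (Or.inr (disjoint_left.2 fun a ha haC => mem_compl.1 (h haC) ha))
  · exact Or.inr (Or.inl (compl_subset_compl.1 h))
  · exact Or.inl (compl_subset_compl.1 h)

end SmallColor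

section TotalKneser

variable {n : ℕ}

namespace TKVert

lemma parts_eq (P : TKVert n) {A : Finset (Fin n)} (hA : A ∈ P.1) : P.1 = {A, Aᶜ} := by
  obtain ⟨hcard, -, hdisj, hsup⟩ := P.2
  obtain ⟨X, Y, hXY, hP⟩ := card_eq_two.1 hcard
  rw [hP, sup_insert, sup_singleton, id, ← top_eq_univ] at hsup
  have hcompl : IsCompl X Y :=
    ⟨hdisj X (by simp [hP]) Y (by simp [hP]) hXY, codisjoint_iff.2 hsup⟩
  rw [hP] at hA ⊢
  rcases (by simpa using hA : A = X ∨ A = Y) with rfl | rfl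
  · rw [hcompl.compl_eq]
  · rw [hcompl.symm.compl_eq, pair_comm]

lemma compl_mem (P : TKVert n) {A : Finset (Fin n)} (hA : A ∈ P.1) : Aᶜ ∈ P.1 := by
  rw [parts_eq P hA]
  exact mem_insert_of_mem (mem_singleton_self _)

lemma eq_or_eq_compl (P : TKVert n) {A X : Finset (Fin n)} (hA : A ∈ P.1) (hX : X ∈ P.1) :
    X = A ∨ X = Aᶜ := by
  simpa [parts_eq P hA] using hX

lemma nonempty_of_mem (P : TKVert n) {A : Finset (Fin n)} (hA : A ∈ P.1) : A.Nonempty :=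
  P.2.2.1 A hA

lemma exists_mem (P : TKVert n) : ∃ A, A ∈ P.1 :=
  card_pos.1 (by rw [P.2.1]; exact two_pos)

lemma eq_of_mem {P Q : TKVert n} {A : Finset (Fin n)} (hP : A ∈ P.1) (hQ : A ∈ Q.1) : P = Q :=
  Subtype.ext (by rw [parts_eq P hP, parts_eq Q hQ])

end TKVert

lemma KG_adj_iff {P Q : TKVert n} :
    (KG n).Adj P Q ↔ P ≠ Q ∧ ∃ X ∈ P.1, ∃ Y ∈ Q.1, X ⊆ Y ∨ Y ⊆ X := by
  refine ⟨fun ⟨hne, h⟩ => ⟨hne, ?_⟩, fun ⟨hne, X, hX, Y, hY, h⟩ => ⟨hne, ?_⟩⟩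
  · rcases h with ⟨X, hX, Y, hY, h⟩ | ⟨Y, hY, X, hX, h⟩
    exacts [⟨X, hX, Y, hY, Or.inl h⟩, ⟨X, hX, Y, hY, Or.inr h⟩]
  · rcases h with h | h
    exacts [Or.inl ⟨X, hX, Y, hY, h⟩, Or.inr ⟨Y, hY, X, hX, h⟩]

noncomputable def kgColor (P : TKVert n) :
    Option (Fin (Nat.log 2 (Fintype.card (Fin n)) + 1) × Fin n) :=
  if h : ∃ A ∈ P.1, 2 * #A < n then
    some (smallColor h.choose (P.nonempty_of_mem h.choose_spec.1))
  else none

lemma kgColor_eq_some {P : TKVert n} {A : Finset (Fin n)} (hA : A ∈ P.1) (hsmall : 2 * #A < n) :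
    kgColor P = some (smallColor A (P.nonempty_of_mem hA)) := by
  have h : ∃ A ∈ P.1, 2 * #A < n := ⟨A, hA, hsmall⟩
  have hchoose : h.choose = A := by
    obtain ⟨hmem, hlt⟩ := h.choose_spec
    rcases P.eq_or_eq_compl hA hmem with heq | heq
    · exact heq
    · rw [heq, card_compl, Fintype.card_fin] at hlt
      omega
  rw [kgColor, dif_pos h]
  congr

lemma two_mul_card_eq_of_not_lt {P : TKVert n} (hbal : ¬ ∃ A ∈ P.1, 2 * #A < n)
    {A : Finset (Fin n)} (hA : A ∈ P.1) : 2 * #A = n := by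
  push Not at hbal
  have h1 := hbal A hA
  have h2 := hbal _ (P.compl_mem hA)
  rw [card_compl, Fintype.card_fin] at h2
  have h3 := card_le_univ A
  rw [Fintype.card_fin] at h3
  omega

theorem kgColor_ne_of_adj {P Q : TKVert n} (h : (KG n).Adj P Q) : kgColor P ≠ kgColor Q := by
  obtain ⟨hPQ, X, hX, Y, hY, hXY⟩ := KG_adj_iff.1 h
  by_cases hP : ∃ A ∈ P.1, 2 * #A < n <;> by_cases hQ : ∃ C ∈ Q.1, 2 * #C < n
  · obtain ⟨A, hA, hAs⟩ := hP
    obtain ⟨C, hC, hCs⟩ := hQ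
    rw [kgColor_eq_some hA hAs, kgColor_eq_some hC hCs, Ne, Option.some_inj]
    have hnested := nested_of_two_mul_card_lt (by rwa [Fintype.card_fin])
      (by rwa [Fintype.card_fin]) X Y (P.eq_or_eq_compl hA hX)
      (Q.eq_or_eq_compl hC hY) hXY
    rcases hnested with hAC | hCA | hdisj
    · rcases hAC.eq_or_ssubset with heq | hAC
      · exact absurd (TKVert.eq_of_mem hA (heq ▸ hC)) hPQ
      · exact smallColor_ne_of_ssubset _ hAC
    · rcases hCA.eq_or_ssubset with heq | hCA
      · exact absurd (TKVert.eq_of_mem (heq ▸ hA) hC) hPQ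
      · exact (smallColor_ne_of_ssubset _ hCA).symm
    · exact smallColor_ne_of_disjoint _ _ hdisj
  · obtain ⟨A, hA, hAs⟩ := hP
    rw [kgColor_eq_some hA hAs, kgColor, dif_neg hQ]
    exact Option.some_ne_none _
  · obtain ⟨C, hC, hCs⟩ := hQ
    rw [kgColor_eq_some hC hCs, kgColor, dif_neg hP]
    exact (Option.some_ne_none _).symm
  · have hcard : #X = #Y := by
      have := two_mul_card_eq_of_not_lt hP hX
      have := two_mul_card_eq_of_not_lt hQ hY
      omega
    have hXeqY : X = Y := by
      rcases hXY with hXY | hYX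
      exacts [eq_of_subset_of_card_le hXY hcard.ge, (eq_of_subset_of_card_le hYX hcard.le).symm]
    exact absurd (TKVert.eq_of_mem hX (hXeqY ▸ hY)) hPQ

theorem KG_colorable (n : ℕ) : (KG n).Colorable ((Nat.log 2 n + 1) * n + 1) := by
  simpa using (SimpleGraph.Coloring.mk kgColor kgColor_ne_of_adj).colorable

end TotalKneser

lemma Fin.val_sub_eq_ite {n : ℕ} (a b : Fin n) :
    (a - b).val = if b ≤ a then a.val - b.val else n + a.val - b.val := by
  split_ifs with h
  exacts [Fin.sub_val_of_le h, Fin.coe_sub_iff_lt.2 (not_le.1 h)]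

section Arc

variable {n : ℕ}

/-- The cyclic interval `[p, q) = {p, p + 1, …, q - 1}`, empty when `p = q`: `x - p` is the
distance from `p` forward to `x`. -/
def arc (p q : Fin n) : Finset (Fin n) := {x | x - p < q - p}

lemma mem_arc {p q x : Fin n} : x ∈ arc p q ↔ x - p < q - p := by
  simp [arc]

lemma val_sub_add_val_sub {p q : Fin n} (h : p ≠ q) : (q - p).val + (p - q).val = n := by
  have := Fin.val_ne_of_ne h
  simp only [Fin.val_sub_eq_ite, Fin.le_def]
  split_ifs <;> omega

lemma compl_arc {p q : Fin n} (h : p ≠ q) : (arc p q)ᶜ = arc q p := by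
  ext x
  have := Fin.val_ne_of_ne h
  have := x.isLt
  simp only [mem_compl, mem_arc, Fin.lt_def, Fin.val_sub_eq_ite, Fin.le_def]
  split_ifs <;> omega

lemma arc_subset_arc_of_le {p q e : Fin n} (h : q - p ≤ e - p) : arc p q ⊆ arc p e :=
  fun _ hx => mem_arc.2 ((mem_arc.1 hx).trans_le h)

lemma arc_subset_arc_of_le_of_lt {p q s e : Fin n} (hpq : p ≠ q) (hqs : q - p ≤ s - p)
    (hse : s - p < e - p) : arc s e ⊆ arc q p := by
  intro x hx
  have := Fin.val_ne_of_ne hpq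
  have := x.isLt
  have := e.isLt
  have := s.isLt
  rw [mem_arc] at hx ⊢
  simp only [Fin.lt_def, Fin.le_def, Fin.val_sub_eq_ite] at hx hqs hse ⊢
  split_ifs at hx hqs hse ⊢ <;> omega

variable [NeZero n]

lemma card_arc (p q : Fin n) : #(arc p q) = (q - p).val := by
  rw [← Fin.card_Iio]
  exact card_equiv (Equiv.subRight p) fun x => by simp [mem_arc]

lemma self_mem_arc {p q : Fin n} (h : p ≠ q) : p ∈ arc p q := by
  rw [mem_arc, sub_self, Fin.pos_iff_ne_zero]
  exact sub_ne_zero.2 h.symm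

lemma arc_subset_or_arc_subset {p q s e : Fin n} (hpq : p ≠ q) (hse : s ≠ e)
    (hs : s ∉ arc p q) (he : e ∉ arc p q) : arc s e ⊆ arc q p ∨ arc e s ⊆ arc q p := by
  rw [mem_arc, not_lt] at hs he
  rcases lt_or_gt_of_ne (sub_left_injective.ne hse : s - p ≠ e - p) with h | h
  exacts [Or.inl (arc_subset_arc_of_le_of_lt hpq hs h),
    Or.inr (arc_subset_arc_of_le_of_lt hpq he h)]

lemma eq_of_arc_eq {p q p' q' : Fin n} (hpq : p ≠ q) (hp'q' : p' ≠ q') (h : arc p q = arc p' q')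
    (hsmall : 2 * #(arc p q) < n) : p = p' := by
  by_contra hne
  have h1 : p ∈ arc p' q' := h ▸ self_mem_arc hpq
  have h2 : p' ∈ arc p q := h ▸ self_mem_arc hp'q'
  have hcard : (q - p).val = (q' - p').val := by rw [← card_arc, ← card_arc, h]
  rw [mem_arc, Fin.lt_def] at h1 h2
  rw [card_arc] at hsmall
  have := val_sub_add_val_sub hne
  omega

lemma val_sub_eq_iff {p x : Fin n} {j : ℕ} (hj : j < n) :
    (x - p).val = j ↔ x.val = (p.val + j) % n := by
  rw [← Fin.val_mk hj, ← Fin.ext_iff, sub_eq_iff_eq_add', Fin.ext_iff, Fin.val_add]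

lemma mem_arc_iff_exists {p q x : Fin n} :
    x ∈ arc p q ↔ ∃ j < (q - p).val, x.val = (p.val + j) % n := by
  rw [mem_arc, Fin.lt_def]
  refine ⟨fun h => ⟨_, h, (val_sub_eq_iff (x - p).isLt).1 rfl⟩, ?_⟩
  rintro ⟨j, hj, hx⟩
  rwa [(val_sub_eq_iff (hj.trans (q - p).isLt)).2 hx]

lemma isCyclicInterval_arc {p q : Fin n} (h : p ≠ q) : IsCyclicInterval (arc p q) := by
  have hpos : 0 < (q - p).val := Fin.pos_iff_ne_zero.2 (sub_ne_zero.2 h.symm)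
  refine ⟨p.val, (q - p).val, hpos, by have := (q - p).isLt; omega, ?_⟩
  ext x
  simp [mem_arc_iff_exists]

lemma exists_arc_eq_of_isCyclicInterval {A : Finset (Fin n)} (h : IsCyclicInterval A) :
    ∃ p q, p ≠ q ∧ A = arc p q := by
  obtain ⟨i, k, hk, hkn, hA⟩ := h
  set p : Fin n := Fin.ofNat n i
  set d : Fin n := ⟨k, by omega⟩
  refine ⟨p, p + d, ?_, ?_⟩
  · rw [Ne, left_eq_add, Fin.ext_iff, Fin.val_zero]
    exact Nat.one_le_iff_ne_zero.1 hk
  · ext x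
    rw [← mem_coe, hA, mem_arc_iff_exists, add_sub_cancel_left]
    simp [p, d, Nat.mod_add_mod]

end Arc

section CyclicIntervalGraph

variable {n : ℕ}

lemma tkPart_pair_compl {A : Finset (Fin n)} (hA : A.Nonempty) (hA' : Aᶜ.Nonempty) :
    TKPart n {A, Aᶜ} := by
  refine ⟨card_pair fun h => ?_, by simp [hA, hA'],
    by simp [disjoint_compl_left, disjoint_compl_right], by simp⟩
  obtain ⟨a, ha⟩ := hA
  exact mem_compl.1 (h ▸ ha) ha

noncomputable instance CGSet.fintype (n : ℕ) : Fintype (CGSet n) := Fintype.ofFinite _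

def IsCutPoint (P : TKVert n) (z : Fin n) : Prop := ∃ w, arc z w ∈ P.1

lemma KG_adj_of_isCutPoint {P Q : TKVert n} {z : Fin n} (hne : P ≠ Q) (hP : IsCutPoint P z)
    (hQ : IsCutPoint Q z) : (KG n).Adj P Q := by
  obtain ⟨w, hw⟩ := hP
  obtain ⟨w', hw'⟩ := hQ
  exact KG_adj_iff.2 ⟨hne, _, hw, _, hw',
    (le_total (w - z) (w' - z)).imp arc_subset_arc_of_le arc_subset_arc_of_le⟩

def minPartCard (P : TKVert n) : ℕ := P.1.inf' P.exists_mem card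

lemma minPartCard_eq (P : TKVert n) {A : Finset (Fin n)} (hA : A ∈ P.1) :
    minPartCard P = min #A #Aᶜ := by
  have hP := P.parts_eq hA
  obtain ⟨S, hS⟩ := P
  subst hP
  simp [minPartCard, inf'_insert]

variable [NeZero n]

def cut (p q : Fin n) (h : p ≠ q) : CGSet n :=
  ⟨⟨{arc p q, (arc p q)ᶜ},
    tkPart_pair_compl ⟨p, self_mem_arc h⟩ (compl_arc h ▸ ⟨q, self_mem_arc h.symm⟩)⟩, by
    intro A hA
    rcases (by simpa using hA : A = arc p q ∨ A = (arc p q)ᶜ) with rfl | rfl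
    · exact isCyclicInterval_arc h
    · exact compl_arc h ▸ isCyclicInterval_arc h.symm⟩

lemma exists_isCutPoint_mem_arc {P : TKVert n} {u : CGSet n} {p q : Fin n} (hpq : p ≠ q)
    (hP : arc p q ∈ P.1) (hadj : ¬ (KG n).Adj u.1 P) : ∃ z ∈ arc p q, IsCutPoint u.1 z := by
  by_cases hu : u.1 = P
  · exact ⟨p, self_mem_arc hpq, q, hu ▸ hP⟩
  obtain ⟨A, hA⟩ := u.1.exists_mem
  obtain ⟨s, e, hse, rfl⟩ := exists_arc_eq_of_isCyclicInterval (u.2 A hA)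
  have hes : arc e s ∈ u.1.1 := compl_arc hse ▸ u.1.compl_mem hA
  by_contra! hnone
  have hs : s ∉ arc p q := fun hs => hnone s hs ⟨e, hA⟩
  have he : e ∉ arc p q := fun he => hnone e he ⟨s, hes⟩
  have hqp : arc q p ∈ P.1 := compl_arc hpq ▸ P.compl_mem hP
  rcases arc_subset_or_arc_subset hpq hse hs he with h | h
  · exact hadj (KG_adj_iff.2 ⟨hu, _, hA, _, hqp, Or.inl h⟩)
  · exact hadj (KG_adj_iff.2 ⟨hu, _, hes, _, hqp, Or.inl h⟩)

lemma card_le_card_arc_of_isIndepSet {S : Finset (CGSet n)} (hS : (CG n).IsIndepSet S)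
    {v : CGSet n} (hv : v ∈ S) {p q : Fin n} (hpq : p ≠ q) (hP : arc p q ∈ v.1.1) :
    #S ≤ #(arc p q) := by
  refine card_le_card_of_forall_subsingleton (fun u z => IsCutPoint u.1 z)
    (fun u hu => exists_isCutPoint_mem_arc hpq hP fun hadj => ?_) ?_
  · refine hS hu hv ?_ hadj
    rintro rfl
    exact (KG n).irrefl hadj
  · rintro z - u ⟨hu, hzu⟩ u' ⟨hu', hzu'⟩
    by_contra hne
    exact hS hu hu' hne (KG_adj_of_isCutPoint (Subtype.coe_injective.ne hne) hzu hzu')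

lemma card_le_minPartCard_of_isIndepSet {S : Finset (CGSet n)} (hS : (CG n).IsIndepSet S)
    {v : CGSet n} (hv : v ∈ S) : #S ≤ minPartCard v.1 :=
  le_inf' _ _ fun A hA => by
    obtain ⟨p, q, hpq, rfl⟩ := exists_arc_eq_of_isCyclicInterval (v.2 A hA)
    exact card_le_card_arc_of_isIndepSet hS hv hpq hA

lemma minPartCard_cut {p q : Fin n} (h : p ≠ q) (hsmall : 2 * (q - p).val < n) :
    minPartCard (cut p q h).1 = (q - p).val := by
  rw [minPartCard_eq _ (mem_insert_self (arc p q) _), card_compl, card_arc, Fintype.card_fin]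
  omega

lemma eq_of_cut_eq {p p' e : Fin n} (h : p ≠ p + e) (h' : p' ≠ p' + e) (hsmall : 2 * e.val < n)
    (heq : cut p (p + e) h = cut p' (p' + e) h') : p = p' := by
  have hmem : arc p (p + e) ∈ (cut p' (p' + e) h').1.1 := heq ▸ mem_insert_self _ _
  rcases (by simpa [cut] using hmem : arc p (p + e) = arc p' (p' + e) ∨ _) with harc | harc
  · exact eq_of_arc_eq h h' harc (by rwa [card_arc, add_sub_cancel_left])
  · have hcard := congrArg card harc
    rw [card_compl, card_arc, card_arc, add_sub_cancel_left, add_sub_cancel_left,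
      Fintype.card_fin] at hcard
    omega

lemma le_card_minPartCard_eq {d : ℕ} (hd : 0 < d) (hdn : 2 * d < n) :
    n ≤ #{v : CGSet n | minPartCard v.1 = d} := by
  set e : Fin n := ⟨d, by omega⟩
  have hne (p : Fin n) : p ≠ p + e := by
    rw [Ne, left_eq_add, Fin.ext_iff, Fin.val_zero]
    exact hd.ne'
  have hlen (p : Fin n) : (p + e - p).val = d := by rw [add_sub_cancel_left]
  have hmaps (p : Fin n) : minPartCard (cut p (p + e) (hne p)).1 = d := by
    rw [minPartCard_cut _ (by rwa [hlen]), hlen]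
  have hinj : Function.Injective fun p => cut p (p + e) (hne p) :=
    fun p p' => eq_of_cut_eq (hne p) (hne p') hdn
  simpa using card_le_card_of_injOn (s := univ) (t := {v : CGSet n | minPartCard v.1 = d}) _
    (fun p _ => by simp [hmaps]) hinj.injOn

lemma mul_harmonic_le_sum_inv_minPartCard :
    (n : ℚ) * harmonic ((n - 1) / 2) ≤ ∑ v : CGSet n, (minPartCard v.1 : ℚ)⁻¹ := by
  have hn := NeZero.pos n
  rw [harmonic_eq_sum_Icc, mul_sum]
  calc ∑ d ∈ Icc 1 ((n - 1) / 2), (n : ℚ) * (d : ℚ)⁻¹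
      ≤ ∑ d ∈ Icc 1 ((n - 1) / 2), #{v : CGSet n | minPartCard v.1 = d} • (d : ℚ)⁻¹ := by
        refine sum_le_sum fun d hd => ?_
        rw [mem_Icc] at hd
        rw [nsmul_eq_mul]
        gcongr
        exact_mod_cast le_card_minPartCard_eq (by omega) (by omega)
    _ ≤ ∑ d ∈ univ.image fun v : CGSet n => minPartCard v.1,
          #{v : CGSet n | minPartCard v.1 = d} • (d : ℚ)⁻¹ := by
        refine sum_le_sum_of_subset_of_nonneg (fun d hd => ?_) fun _ _ _ => by positivity
        rw [mem_Icc] at hd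
        obtain ⟨v, hv⟩ := card_pos.1 (hn.trans_le
          (le_card_minPartCard_eq (d := d) (by omega) (by omega)))
        exact mem_image.2 ⟨v, mem_univ _, (mem_filter.1 hv).2⟩
    _ = ∑ v : CGSet n, (minPartCard v.1 : ℚ)⁻¹ := (sum_comp (fun d : ℕ => (d : ℚ)⁻¹) _).symm

theorem mul_harmonic_le_of_CG_colorable {m : ℕ} (h : (CG n).Colorable m) :
    (n : ℚ) * harmonic ((n - 1) / 2) ≤ m :=
  mul_harmonic_le_sum_inv_minPartCard.trans <| SimpleGraph.sum_inv_le_of_colorable _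
    (fun _ hS _ hv => card_le_minPartCard_of_isIndepSet hS hv) h

end CyclicIntervalGraph

section Asymptotics

lemma log_div_four_le_harmonic {n : ℕ} (hn : 3 ≤ n) :
    Real.log n / 4 ≤ harmonic ((n - 1) / 2) := by
  have hnR : (3 : ℝ) ≤ n := by exact_mod_cast hn
  have hlog2 : 4 * Real.log 2 ≤ 3 * Real.log n :=
    calc 4 * Real.log 2 = Real.log (2 ^ 4) := by rw [Real.log_pow]; norm_num
      _ ≤ Real.log (3 ^ 3) := Real.log_le_log (by norm_num) (by norm_num)
      _ = 3 * Real.log 3 := by rw [Real.log_pow]; norm_num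
      _ ≤ 3 * Real.log n := by gcongr
  have hhalf : (n : ℝ) / 2 ≤ ((n - 1) / 2 + 1 : ℕ) := by
    rw [div_le_iff₀ two_pos]
    exact_mod_cast (by omega : n ≤ ((n - 1) / 2 + 1) * 2)
  calc Real.log n / 4 ≤ Real.log n - Real.log 2 := by linarith
    _ = Real.log (n / 2) := (Real.log_div (by positivity) two_ne_zero).symm
    _ ≤ Real.log ((n - 1) / 2 + 1 : ℕ) := Real.log_le_log (by positivity) hhalf
    _ ≤ harmonic ((n - 1) / 2) := log_add_one_le_harmonic _

lemma natLog_succ_mul_add_one_le {n : ℕ} (hn : 3 ≤ n) :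
    (((Nat.log 2 n + 1) * n + 1 : ℕ) : ℝ) ≤ 4 * n * Real.log n := by
  have hnR : (3 : ℝ) ≤ n := by exact_mod_cast hn
  have hlog : 1 ≤ Real.log n := by
    rw [Real.le_log_iff_exp_le (by positivity)]
    linarith [Real.exp_one_lt_d9]
  have hlog2 : (Nat.log 2 n : ℝ) ≤ 2 * Real.log n := by
    have h := Real.natLog_le_logb n 2
    rw [Real.logb, Nat.cast_ofNat, le_div_iff₀ (Real.log_pos one_lt_two)] at h
    nlinarith [Real.log_two_gt_d9]
  push_cast
  nlinarith

end Asymptotics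

open SimpleGraph in
/-- The chromatic numbers of `CG(n)` and `KG(n)` are both `Θ(n log n)`. -/
theorem chromatic_CG_KG_theta :
    ∃ c C : ℝ, 0 < c ∧ 0 < C ∧ ∀ n : ℕ, 3 ≤ n →
      ∃ a b : ℕ, (CG n).chromaticNumber = a ∧ (KG n).chromaticNumber = b ∧
        c * n * Real.log n ≤ (a : ℝ) ∧ a ≤ b ∧ (b : ℝ) ≤ C * n * Real.log n := by
  refine ⟨1 / 4, 4, by norm_num, by norm_num, fun n hn => ?_⟩
  have : NeZero n := ⟨by omega⟩
  have hKG := KG_colorable n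
  obtain ⟨b, hb⟩ := ENat.ne_top_iff_exists.1 (chromaticNumber_ne_top_iff_exists.2 ⟨_, hKG⟩)
  have hCG : (CG n).chromaticNumber ≤ b :=
    hb ▸ chromaticNumber_mono_of_hom (Embedding.induce _).toHom
  obtain ⟨a, ha⟩ := ENat.ne_top_iff_exists.1 (ne_top_of_le_ne_top (ENat.natCast_ne_top b) hCG)
  refine ⟨a, b, ha.symm, hb.symm, ?_, by exact_mod_cast ha ▸ hCG, ?_⟩
  · have hlower := mul_harmonic_le_of_CG_colorable (chromaticNumber_le_iff_colorable.1 ha.ge)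
    calc 1 / 4 * n * Real.log n = n * (Real.log n / 4) := by ring
      _ ≤ n * harmonic ((n - 1) / 2) := by gcongr; exact log_div_four_le_harmonic hn
      _ ≤ a := by exact_mod_cast hlower
  · have hupper : b ≤ (Nat.log 2 n + 1) * n + 1 := by exact_mod_cast hb ▸ hKG.chromaticNumber_le
    calc (b : ℝ) ≤ ((Nat.log 2 n + 1) * n + 1 : ℕ) := by exact_mod_cast hupper
      _ ≤ 4 * n * Real.log n := natLog_succ_mul_add_one_le hn
end

section
/- For a nonempty finite set A of natural numbers, write |A| = 2^{k+1} − l with integers k ≥ 0 and 1 ≤ l ≤ 2^k (this representation is unique), and define color(A) = (k, a), where a is the l-th largest element of A. Then for any two distinct nonempty finite sets A and B of natural numbers with color(A) = color(B), one has: A ∩ B ≠ ∅, A is not a subset of B, and B is not a subset of A. -/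
/-! If `A` has colour `(k, a)` then `|A| + l = 2^(k+1)`, where `l` counts the elements of `A`
that are `≥ a`. For `A ⊆ B` with the same `a`, both summands can only grow from `A` to `B`, so equal
sums force `|A| = |B|`, i.e. `A = B`. Sets of the same colour share the element `a`. -/

namespace Finset

variable {α : Type*} (p : α → Prop) [DecidablePred p]

-- The hypothesis carries a truncated subtraction; it is harmless since `#(s.filter p) ≤ #s`.
theorem card_add_card_filter_of_card_eq_sub {s : Finset α} {n : ℕ}
    (h : #s = n - #(s.filter p)) : #s + #(s.filter p) = n := by
  have := card_filter_le s p
  omega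

theorem eq_of_subset_of_card_add_card_filter_eq {s t : Finset α} (hst : s ⊆ t)
    (h : #s + #(s.filter p) = #t + #(t.filter p)) : s = t :=
  eq_of_subset_of_card_le hst (by
    have := card_le_card (filter_subset_filter p hst)
    omega)

end Finset

theorem kneser_coloring_proper_general (A B : Finset ℕ)
    (hAB : A ≠ B)
    (k l : ℕ) (hkl : A.card = 2 ^ (k + 1) - l)
    (k' l' : ℕ) (hkl' : B.card = 2 ^ (k' + 1) - l')
    (a : ℕ) (haA : a ∈ A) (hla : (A.filter fun x => a ≤ x).card = l)
    (b : ℕ) (hbB : b ∈ B) (hlb : (B.filter fun x => b ≤ x).card = l')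
    (hcolor : k = k' ∧ a = b) :
    (A ∩ B).Nonempty ∧ ¬ A ⊆ B ∧ ¬ B ⊆ A := by
  obtain ⟨rfl, rfl⟩ := hcolor
  subst hla hlb
  have hA := Finset.card_add_card_filter_of_card_eq_sub _ hkl
  have hB := Finset.card_add_card_filter_of_card_eq_sub _ hkl'
  refine ⟨⟨a, Finset.mem_inter.2 ⟨haA, hbB⟩⟩, fun hsub => hAB ?_, fun hsub => hAB ?_⟩
  · exact Finset.eq_of_subset_of_card_add_card_filter_eq _ hsub (hA.trans hB.symm)
  · exact (Finset.eq_of_subset_of_card_add_card_filter_eq _ hsub (hB.trans hA.symm)).symm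

/-- Kneser-style coloring: write `|A| = 2^(k+1) - l` with `k ≥ 0`, `1 ≤ l ≤ 2^k`, and color
`A` by the pair `(k, a)` where `a` is the `l`-th largest element of `A` (i.e. `a ∈ A` and
exactly `l` elements of `A` are `≥ a`).  Two distinct nonempty finite sets of naturals
receiving the same color intersect, and neither is contained in the other. -/
theorem kneser_coloring_proper (A B : Finset ℕ) (hA : A.Nonempty) (hB : B.Nonempty)
    (hAB : A ≠ B)
    (k l : ℕ) (hkl : A.card = 2 ^ (k + 1) - l) (hl1 : 1 ≤ l) (hl2 : l ≤ 2 ^ k)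
    (k' l' : ℕ) (hkl' : B.card = 2 ^ (k' + 1) - l') (hl1' : 1 ≤ l') (hl2' : l' ≤ 2 ^ k')
    (a : ℕ) (haA : a ∈ A) (hla : (A.filter fun x => a ≤ x).card = l)
    (b : ℕ) (hbB : b ∈ B) (hlb : (B.filter fun x => b ≤ x).card = l')
    (hcolor : k = k' ∧ a = b) :
    (A ∩ B).Nonempty ∧ ¬ A ⊆ B ∧ ¬ B ⊆ A :=
  kneser_coloring_proper_general A B hAB k l hkl k' l' hkl' a haA hla b hbB hlb hcolor
end

section
/- Let G be a simple graph and k ≥ 1 an integer such that: (i) every clique of G is contained in a clique of cardinality k; (ii) G has no clique of cardinality k+1; (iii) G admits a proper coloring with k colors; and (iv) the graph whose vertices are the k-element cliques of G, with two such cliques adjacent when their intersection has exactly k−1 elements, is connected. Then G is uniquely k-colorable: for any two proper colorings c₁, c₂ of G with color set Fin k, there is a permutation σ of Fin k with c₂ = σ ∘ c₁. -/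
/-!
On a `k`-clique `t` both colourings are bijections onto the `k` colours, so they differ by a
permutation `σ_t` of the colours. If two `k`-cliques share `k - 1` vertices, their permutations
agree on `k - 1` colours and hence everywhere. Connectivity of the clique graph makes `σ_t`
independent of `t`, and every vertex lies in some `k`-clique, so `c₂ = σ ∘ c₁`.
-/

/-- The graph whose vertices are the `k`-element cliques of `G`, two such cliques being
adjacent when their intersection has exactly `k - 1` elements. -/
def maxCliqueGraph {V : Type*} [DecidableEq V] (G : SimpleGraph V) (k : ℕ) :
    SimpleGraph {t : Finset V // G.IsClique ↑t ∧ t.card = k} where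
  Adj s t := s ≠ t ∧ (s.1 ∩ t.1).card = k - 1
  symm := ⟨by
    rintro s t ⟨h1, h2⟩
    exact ⟨h1.symm, by rwa [Finset.inter_comm]⟩⟩
  loopless := ⟨fun s h => h.1 rfl⟩

namespace Equiv.Perm

theorem eq_of_forall_mem_eq_of_card_le {α : Type*} [DecidableEq α] [Fintype α]
    {σ τ : Perm α} (A : Finset α) (hA : Fintype.card α ≤ A.card + 1)
    (h : ∀ a ∈ A, σ a = τ a) : σ = τ := by
  have hsupp : (σ⁻¹ * τ).support ⊆ Aᶜ := by
    intro x hx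
    rw [Finset.mem_compl]
    intro hxA
    exact mem_support.mp hx (by simp [← h x hxA])
  have hcard : (σ⁻¹ * τ).support.card ≤ 1 := by
    have := Finset.card_le_card hsupp
    rw [Finset.card_compl] at this
    omega
  exact inv_mul_eq_one.mp (card_support_le_one.mp hcard)

end Equiv.Perm

namespace SimpleGraph

theorem Reachable.apply_eq_of_forall_adj {W β : Type*} {H : SimpleGraph W} (f : W → β)
    (hf : ∀ u v, H.Adj u v → f u = f v) {u v : W} (h : H.Reachable u v) : f u = f v := by
  obtain ⟨p⟩ := h
  induction p with
  | nil => rfl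
  | cons hadj _ ih => exact (hf _ _ hadj).trans ih

variable {V α : Type*} {G : SimpleGraph V}

theorem IsClique.injOn_coloring {s : Set V} (hs : G.IsClique s) (C : G.Coloring α) :
    Set.InjOn C s := fun u hu v hv huv => by
  by_contra hne
  exact C.valid (hs hu hv hne) huv

namespace Coloring

variable [Fintype α] {t : Finset V}

noncomputable def cliqueEquiv (C : G.Coloring α) (ht : G.IsClique (t : Set V))
    (hcard : t.card = Fintype.card α) : t ≃ α :=
  Equiv.ofBijective (fun v => C v) <| by
    rw [Fintype.bijective_iff_injective_and_card, Fintype.card_coe, hcard]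
    exact ⟨fun u v huv => Subtype.ext (ht.injOn_coloring C u.2 v.2 huv), rfl⟩

noncomputable def cliquePerm (C₁ C₂ : G.Coloring α) (ht : G.IsClique (t : Set V))
    (hcard : t.card = Fintype.card α) : Equiv.Perm α :=
  (C₁.cliqueEquiv ht hcard).symm.trans (C₂.cliqueEquiv ht hcard)

theorem cliquePerm_apply (C₁ C₂ : G.Coloring α) (ht : G.IsClique (t : Set V))
    (hcard : t.card = Fintype.card α) {v : V} (hv : v ∈ t) :
    cliquePerm C₁ C₂ ht hcard (C₁ v) = C₂ v := by
  have : (C₁.cliqueEquiv ht hcard).symm (C₁ v) = ⟨v, hv⟩ := by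
    rw [Equiv.symm_apply_eq]
    rfl
  simp only [cliquePerm, Equiv.trans_apply, this]
  rfl

theorem cliquePerm_eq_of_card_le [DecidableEq V] [DecidableEq α] (C₁ C₂ : G.Coloring α)
    {s : Finset V} (hs : G.IsClique (s : Set V)) (hs_card : s.card = Fintype.card α)
    (ht : G.IsClique (t : Set V)) (ht_card : t.card = Fintype.card α)
    (hst : Fintype.card α ≤ (s ∩ t).card + 1) :
    cliquePerm C₁ C₂ hs hs_card = cliquePerm C₁ C₂ ht ht_card := by
  have hinj : Set.InjOn C₁ ↑(s ∩ t) :=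
    (hs.subset (by simp [Set.inter_subset_left])).injOn_coloring C₁
  refine Equiv.Perm.eq_of_forall_mem_eq_of_card_le ((s ∩ t).image C₁)
    (by rwa [Finset.card_image_of_injOn hinj]) ?_
  simp only [Finset.mem_image, Finset.mem_inter]
  rintro _ ⟨v, ⟨hvs, hvt⟩, rfl⟩
  rw [cliquePerm_apply C₁ C₂ hs hs_card hvs, cliquePerm_apply C₁ C₂ ht ht_card hvt]

end Coloring

end SimpleGraph

open SimpleGraph in
theorem uniquely_colorable_general {V : Type*} [DecidableEq V] (G : SimpleGraph V) (k : ℕ)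
    (hext : ∀ s : Finset V, G.IsClique ↑s → ∃ t : Finset V, s ⊆ t ∧ G.IsClique ↑t ∧ t.card = k)
    (hconn : (maxCliqueGraph G k).Connected) :
    ∀ c₁ c₂ : G.Coloring (Fin k), ∃ σ : Equiv.Perm (Fin k), ∀ v, c₂ v = σ (c₁ v) := by
  intro c₁ c₂
  have hcard (t : Finset V) (ht : t.card = k) : t.card = Fintype.card (Fin k) := by simpa
  let σ (t : {t : Finset V // G.IsClique ↑t ∧ t.card = k}) : Equiv.Perm (Fin k) :=
    c₁.cliquePerm c₂ t.2.1 (hcard _ t.2.2)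
  have hσ (s t) (hadj : (maxCliqueGraph G k).Adj s t) : σ s = σ t :=
    Coloring.cliquePerm_eq_of_card_le c₁ c₂ _ _ _ _ (by rw [Fintype.card_fin, hadj.2]; omega)
  obtain ⟨t₀⟩ := hconn.nonempty
  refine ⟨σ t₀, fun v => ?_⟩
  obtain ⟨t, hvt, ht, htk⟩ := hext {v} (by simp)
  rw [(hconn.preconnected t₀ ⟨t, ht, htk⟩).apply_eq_of_forall_adj σ hσ,
    Coloring.cliquePerm_apply c₁ c₂ ht _ (hvt (Finset.mem_singleton_self v))]

/-- If every clique of `G` extends to a clique of cardinality `k`, `G` has no clique of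
cardinality `k + 1`, `G` is properly `k`-colorable, and the graph of `k`-cliques (adjacent
when meeting in `k - 1` elements) is connected, then `G` is uniquely `k`-colorable. -/
theorem uniquely_colorable {V : Type*} [DecidableEq V] (G : SimpleGraph V) (k : ℕ)
    (hk : 1 ≤ k)
    (hext : ∀ s : Finset V, G.IsClique ↑s → ∃ t : Finset V, s ⊆ t ∧ G.IsClique ↑t ∧ t.card = k)
    (hmax : ∀ t : Finset V, G.IsClique ↑t → t.card ≠ k + 1)
    (hcol : G.Colorable k)
    (hconn : (maxCliqueGraph G k).Connected) :
    ∀ c₁ c₂ : G.Coloring (Fin k), ∃ σ : Equiv.Perm (Fin k), ∀ v, c₂ v = σ (c₁ v) :=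
  uniquely_colorable_general G k hext hconn
end

section
/- Let N be the simple graph whose vertices are the 12 edges of the octahedron graph O, with two edges adjacent if and only if they share no endpoint. Then the chromatic number of N equals 4. -/
/-- The octahedron graph: six vertices with antipodal pairing `x ↔ x + 3`, and edges all
pairs of distinct non-antipodal vertices. -/
def octahedron : SimpleGraph (Fin 6) where
  Adj u v := u ≠ v ∧ u + 3 ≠ v ∧ v + 3 ≠ u
  symm := ⟨fun _ _ ⟨h1, h2, h3⟩ => ⟨h1.symm, h3, h2⟩⟩
  loopless := ⟨fun _ h => h.1 rfl⟩

/-- The graph `N` on the 12 edges of the octahedron, two edges adjacent iff they share no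
endpoint. -/
def edgeDisjointGraph : SimpleGraph ↥octahedron.edgeSet where
  Adj e f := ∀ x : Fin 6, x ∈ (e : Sym2 (Fin 6)) → x ∉ (f : Sym2 (Fin 6))
  symm := ⟨fun e f h x hxf hxe => h x hxe hxf⟩
  loopless := by
    constructor
    intro e h
    have hm := Sym2.out_fst_mem e.1
    exact h _ hm hm

/-!
Independent sets of `N` are families of pairwise meeting edges of `O`. Such a family either
has a common vertex or lies in a triangle, so it has at most four members, `O` being 4-regular.
In a 3-colouring of the twelve edges every colour class must therefore be a star of four edges,
and the three centres would cover every edge of `O`; but any three vertices of `O` miss an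
edge. Conversely, colouring each edge by its first vertex in a fixed triangle of `O`, and the
edges of the opposite triangle by a fourth colour, is a proper colouring of `N`.
-/

open Finset SimpleGraph

theorem Sym2.exists_mem_forall_of_pairwise_meet {α : Type*} {F : Finset (Sym2 α)}
    (hdiag : ∀ e ∈ F, ¬ e.IsDiag)
    (hmeet : (F : Set (Sym2 α)).Pairwise fun e f => ∃ x, x ∈ e ∧ x ∈ f) (hcard : 3 < #F) :
    ∃ v, ∀ e ∈ F, v ∈ e := by
  classical
  have meet : ∀ e ∈ F, ∀ f ∈ F, ∃ x, x ∈ e ∧ x ∈ f := fun e he f hf =>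
    (eq_or_ne e f).elim (fun h => h ▸ ⟨_, e.out_fst_mem, e.out_fst_mem⟩) (hmeet he hf)
  by_contra! hstar
  obtain ⟨e, he⟩ := card_pos.1 (by omega : 0 < #F)
  induction e using Sym2.ind with | _ a b => ?_
  obtain ⟨f, hf, haf⟩ := hstar a
  obtain ⟨c, rfl⟩ : ∃ c, f = s(b, c) := by
    obtain ⟨x, hx, hxf⟩ := meet _ he _ hf
    obtain rfl | rfl := Sym2.mem_iff.1 hx
    · exact absurd hxf haf
    · exact Sym2.mem_iff_exists.1 hxf
  obtain ⟨g, hg, hbg⟩ := hstar b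
  obtain ⟨d, rfl⟩ : ∃ d, g = s(a, d) := by
    obtain ⟨x, hx, hxg⟩ := meet _ he _ hg
    obtain rfl | rfl := Sym2.mem_iff.1 hx
    · exact Sym2.mem_iff_exists.1 hxg
    · exact absurd hxg hbg
  have htriangle : F ⊆ {s(a, b), s(b, c), s(a, d)} := by
    intro h hh
    induction h using Sym2.ind with | _ x y => ?_
    have hxy : x ≠ y := hdiag _ hh
    have hbc : b ≠ c := hdiag _ hf
    obtain ⟨p, hp, hpe⟩ := meet _ hh _ he
    obtain ⟨q, hq, hqf⟩ := meet _ hh _ hf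
    obtain ⟨r, hr, hrg⟩ := meet _ hh _ hg
    obtain ⟨t, htf, htg⟩ := meet _ hf _ hg
    simp only [Sym2.mem_iff, mem_insert, mem_singleton, Sym2.eq_iff] at *
    grind
  have := (card_le_card htriangle).trans card_le_three
  omega

theorem SimpleGraph.exists_mem_forall_of_pairwise_meet {V : Type*} (G : SimpleGraph V)
    {F : Finset (Sym2 V)} (hF : ∀ e ∈ F, e ∈ G.edgeSet)
    (hmeet : (F : Set (Sym2 V)).Pairwise fun e f => ∃ x, x ∈ e ∧ x ∈ f) (hcard : 3 < #F) :
    ∃ v, ∀ e ∈ F, v ∈ e :=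
  Sym2.exists_mem_forall_of_pairwise_meet (fun e he => G.not_isDiag_of_mem_edgeSet (hF e he))
    hmeet hcard

theorem SimpleGraph.IsRegularOfDegree.card_le_of_pairwise_meet {V : Type*} [Fintype V]
    [DecidableEq V] {G : SimpleGraph V} [DecidableRel G.Adj] {d : ℕ}
    (hG : G.IsRegularOfDegree d) (hd : 3 ≤ d)
    {F : Finset (Sym2 V)} (hF : F ⊆ G.edgeFinset)
    (hmeet : (F : Set (Sym2 V)).Pairwise fun e f => ∃ x, x ∈ e ∧ x ∈ f) : #F ≤ d := by
  by_contra! hd'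
  obtain ⟨v, hv⟩ := G.exists_mem_forall_of_pairwise_meet (fun e he => mem_edgeFinset.1 (hF he))
    hmeet (by omega)
  have hstar : F ⊆ G.incidenceFinset v := fun e he =>
    (G.mem_incidenceFinset v e).2 ⟨mem_edgeFinset.1 (hF he), hv e he⟩
  have := card_le_card hstar
  rw [card_incidenceFinset_eq_degree, hG.degree_eq] at this
  omega

instance : DecidableRel octahedron.Adj := fun u v =>
  inferInstanceAs (Decidable (u ≠ v ∧ u + 3 ≠ v ∧ v + 3 ≠ u))

theorem octahedron_isRegularOfDegree_four : octahedron.IsRegularOfDegree 4 := by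
  unfold IsRegularOfDegree; decide

theorem card_edgeFinset_octahedron : #octahedron.edgeFinset = 12 := by
  have := octahedron.sum_degrees_eq_twice_card_edges
  simp only [octahedron_isRegularOfDegree_four.degree_eq, sum_const, card_univ,
    Fintype.card_fin, smul_eq_mul] at this
  omega

theorem octahedron_exists_adj_avoiding (u v w : Fin 6) :
    ∃ a b, octahedron.Adj a b ∧ a ≠ u ∧ a ≠ v ∧ a ≠ w ∧ b ≠ u ∧ b ≠ v ∧ b ≠ w := by
  revert u v w; decide

theorem not_adj_edgeDisjointGraph_iff {e f : octahedron.edgeSet} :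
    ¬ edgeDisjointGraph.Adj e f ↔ ∃ x, x ∈ (e : Sym2 (Fin 6)) ∧ x ∈ (f : Sym2 (Fin 6)) := by
  simp [edgeDisjointGraph]

theorem edgeDisjointGraph_not_colorable_three : ¬ edgeDisjointGraph.Colorable 3 := by
  rintro ⟨C⟩
  let cls (i : Fin 3) : Finset (Sym2 (Fin 6)) := ({e | C e = i} : Finset _).map (.subtype _)
  have hsub i : cls i ⊆ octahedron.edgeFinset := by
    intro e he
    obtain ⟨e, -, rfl⟩ := mem_map.1 he
    exact mem_edgeFinset.2 e.2
  have hmeet i : (cls i : Set (Sym2 (Fin 6))).Pairwise fun e f => ∃ x, x ∈ e ∧ x ∈ f := by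
    rw [coe_map, Set.InjOn.pairwise_image (Function.Embedding.injective _).injOn]
    intro e he f hf _
    simp only [coe_filter, mem_univ, true_and, Set.mem_ofPred_eq] at he hf
    exact not_adj_edgeDisjointGraph_iff.1 fun h => C.valid h (he.trans hf.symm)
  have hsum : ∑ i, #(cls i) = 12 := by
    simp only [cls, card_map, ← card_eq_sum_card_fiberwise (fun e _ => mem_univ (C e)), card_univ,
      ← edgeFinset_card, card_edgeFinset_octahedron]
  have hfour i : #(cls i) = 4 := by
    have hle i := octahedron_isRegularOfDegree_four.card_le_of_pairwise_meet (by norm_num)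
      (hsub i) (hmeet i)
    by_contra hne
    have : ∑ j, #(cls j) < ∑ _j : Fin 3, 4 :=
      sum_lt_sum (fun j _ => hle j) ⟨i, mem_univ i, (hle i).lt_of_ne hne⟩
    simp only [hsum, sum_const, card_univ, Fintype.card_fin, smul_eq_mul] at this
    omega
  choose v hv using fun i => octahedron.exists_mem_forall_of_pairwise_meet
    (fun e he => mem_edgeFinset.1 (hsub i he)) (hmeet i) (by rw [hfour i]; norm_num)
  obtain ⟨a, b, hab, hau, hav, haw, hbu, hbv, hbw⟩ :=
    octahedron_exists_adj_avoiding (v 0) (v 1) (v 2)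
  have hcover : v (C ⟨s(a, b), hab⟩) ∈ s(a, b) := hv _ _ (by simpa [cls])
  rw [Sym2.mem_iff] at hcover
  generalize C ⟨s(a, b), hab⟩ = i at hcover
  fin_cases i <;> grind

def edgeDisjointGraph.coloring : edgeDisjointGraph.Coloring (Fin 4) :=
  Coloring.mk
    (fun e => if 0 ∈ (e : Sym2 (Fin 6)) then 0 else if 1 ∈ (e : Sym2 (Fin 6)) then 1
      else if 2 ∈ (e : Sym2 (Fin 6)) then 2 else 3)
    (by
      rintro ⟨e, he⟩ ⟨f, hf⟩ hadj hcol
      induction e using Sym2.ind with | _ a b => ?_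
      induction f using Sym2.ind with | _ c d => ?_
      simp only [edgeDisjointGraph, Sym2.mem_iff] at hadj hcol
      simp only [mem_edgeSet, octahedron] at he hf
      -- the last colour class lies in the triangle on `3, 4, 5`, whose edges pairwise meet
      split_ifs at hcol <;> grind)

/-- `χ(N) = 4`. -/
theorem chromatic_N_eq_four : edgeDisjointGraph.chromaticNumber = 4 :=
  chromaticNumber_eq_iff_colorable_not_colorable.2
    ⟨edgeDisjointGraph.coloring.colorable, edgeDisjointGraph_not_colorable_three⟩
end

section
/- Let C be the simple graph on the 12 edges of the octahedron graph O together with its 4 unordered antipodal face pairs, with adjacency as specified. Then the chromatic number of C equals 5. -/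
/-- A face of the octahedron: a triangle, i.e. three vertices containing no antipodal pair. -/
def IsFace (T : Finset (Fin 6)) : Prop := T.card = 3 ∧ ∀ x ∈ T, x + 3 ∉ T

/-- An unordered antipodal pair of faces `{T, -T}`. -/
def FacePair := {P : Finset (Finset (Fin 6)) // ∃ T, IsFace T ∧ P = {T, T.image (· + 3)}}

/-- Vertices of the graph `C`: the 12 edges of the octahedron together with the 4
antipodal face pairs. -/
def CVert := ↥octahedron.edgeSet ⊕ FacePair

/-- The graph `C`: two edges adjacent iff they share no endpoint; an edge and a face pair
`{T, -T}` adjacent iff the edge is contained in `T` or in `-T`; no two face pairs adjacent. -/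
def octC : SimpleGraph CVert where
  Adj v w :=
    match v, w with
    | Sum.inl e, Sum.inl f => ∀ x : Fin 6, x ∈ (e : Sym2 (Fin 6)) → x ∉ (f : Sym2 (Fin 6))
    | Sum.inl e, Sum.inr P => ∃ T ∈ P.1, ∀ x ∈ (e : Sym2 (Fin 6)), x ∈ T
    | Sum.inr P, Sum.inl e => ∃ T ∈ P.1, ∀ x ∈ (e : Sym2 (Fin 6)), x ∈ T
    | Sum.inr _, Sum.inr _ => False
  symm := by
    constructor
    rintro (e | P) (f | Q) h
    · exact fun x hxf hxe => h x hxe hxf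
    · exact h
    · exact h
    · exact h
  loopless := by
    constructor
    rintro (e | P) h
    · exact h _ (Sym2.out_fst_mem e.1) (Sym2.out_fst_mem e.1)
    · exact h


/-!
In a proper colouring the edges of `O` of one colour pairwise meet, so they form a star
(at most 4 edges) or lie in a triangle (at most 3). If the colour is also used on a face pair
`{T, -T}`, these edges avoid `T` and `-T`, i.e. lie in the hexagon between them, which leaves
room for at most 2; if it is used on two face pairs at most 1, on three none. With four colours
the 12 edges then fit only if all face pairs share a colour that no edge gets, and the three other
classes are full stars. Their centres would be three vertices meeting every edge of `O`, which do
not exist. Five colours do suffice: the stars at the antipodes `0` and `3`, two paths splitting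
the remaining 4-cycle, and one colour for all face pairs.
-/

open Finset

theorem Sym2.exists_forall_mem_or_subset_sym2_of_pairwise {α : Type*} [DecidableEq α]
    {s : Set (Sym2 α)} (hdiag : ∀ e ∈ s, ¬ e.IsDiag)
    (hs : s.Pairwise fun e f => ∃ x, x ∈ e ∧ x ∈ f) :
    (∃ v, ∀ e ∈ s, v ∈ e) ∨ ∃ T : Finset α, #T ≤ 3 ∧ ∀ e ∈ s, e ∈ T.sym2 := by
  have other_mem : ∀ {p q : α} {e}, s(p, q) ∈ s → e ∈ s → p ∉ e → q ∈ e := by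
    intro p q e hpq he hp
    obtain ⟨z, hz, hze⟩ := hs hpq he (by rintro rfl; exact hp (Sym2.mem_mk_left p q))
    rcases Sym2.mem_iff.mp hz with rfl | rfl
    exacts [absurd hze hp, hze]
  by_cases hstar : ∃ v, ∀ e ∈ s, v ∈ e
  · exact .inl hstar
  push Not at hstar
  right
  rcases s.eq_empty_or_nonempty with rfl | ⟨e₀, he₀⟩
  · exact ⟨∅, by simp, by simp⟩
  induction e₀ using Sym2.ind with | _ a b => ?_
  obtain ⟨f, hf, haf⟩ := hstar a
  obtain ⟨g, hg, hbg⟩ := hstar b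
  obtain ⟨c, rfl⟩ : ∃ c, f = s(b, c) := ⟨_, (Sym2.other_spec (other_mem he₀ hf haf)).symm⟩
  have hac : a ≠ c := by rintro rfl; simp at haf
  obtain rfl : g = s(a, c) :=
    (Sym2.mem_and_mem_iff hac).mp ⟨other_mem (Sym2.eq_swap ▸ he₀) hg hbg, other_mem hf hg hbg⟩
  refine ⟨{a, b, c}, card_le_three, fun h hh => mem_sym2_iff.mpr fun x hx => ?_⟩
  obtain ⟨y, rfl⟩ : ∃ y, h = s(x, y) := ⟨_, (Sym2.other_spec hx).symm⟩
  by_contra hx'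
  simp only [mem_insert, mem_singleton, not_or] at hx'
  -- `x` lies outside the triangle, so the other endpoint `y` must meet all three of its sides
  have hyab := other_mem hh he₀ (by simp [hx'.1, hx'.2.1])
  have hybc := other_mem hh hf (by simp [hx'.2.1, hx'.2.2])
  have hyac := other_mem hh hg (by simp [hx'.1, hx'.2.2])
  have hab := hdiag _ he₀
  have hbc := hdiag _ hf
  simp only [Sym2.mem_iff, Sym2.mk_isDiag_iff] at hyab hybc hyac hab hbc
  grind

instance inst_s10 : DecidableRel octahedron.Adj := fun u v =>
  inferInstanceAs (Decidable (u ≠ v ∧ u + 3 ≠ v ∧ v + 3 ≠ u))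

namespace Octahedron

theorem card_edgeFinset : #octahedron.edgeFinset = 12 := by decide

theorem exists_edge_disjoint_of_card_le_three :
    ∀ S : Finset (Fin 6), #S ≤ 3 → ∃ e ∈ octahedron.edgeFinset, ∀ v ∈ S, v ∉ e := by
  decide

/-- One face from each of the four antipodal pairs. -/
def face : Fin 4 → Finset (Fin 6) := ![{0, 1, 2}, {0, 1, 5}, {0, 2, 4}, {0, 4, 5}]

theorem isFace_face (i : Fin 4) : IsFace (face i) := by
  revert i
  unfold IsFace
  decide

def facePair (i : Fin 4) : FacePair :=
  ⟨{face i, (face i).image (· + 3)}, face i, isFace_face i, rfl⟩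

def facePairEdges (i : Fin 4) : Finset (Sym2 (Fin 6)) :=
  (face i).sym2 ∪ ((face i).image (· + 3)).sym2

def edgesAvoiding (A : Finset (Fin 4)) : Finset (Sym2 (Fin 6)) :=
  {e ∈ octahedron.edgeFinset | ∀ i ∈ A, e ∉ facePairEdges i}

theorem not_isDiag_of_mem_edgesAvoiding {A : Finset (Fin 4)} {e : Sym2 (Fin 6)}
    (he : e ∈ edgesAvoiding A) : ¬ e.IsDiag :=
  octahedron.not_isDiag_of_mem_edgeSet (SimpleGraph.mem_edgeFinset.mp (mem_filter.mp he).1)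

def maxClassCard : ℕ → ℕ
  | 0 => 4
  | 1 => 2
  | 2 => 1
  | _ => 0

theorem maxClassCard_le_four (n : ℕ) : maxClassCard n ≤ 4 := by
  rcases n with _ | _ | _ | _ <;> simp [maxClassCard]

theorem card_filter_mem_edgesAvoiding_le :
    ∀ (v : Fin 6) (A : Finset (Fin 4)), #{e ∈ edgesAvoiding A | v ∈ e} ≤ maxClassCard #A := by
  decide

theorem card_filter_mem_sym2_edgesAvoiding_le : ∀ T : Finset (Fin 6), #T ≤ 3 →
    ∀ A : Finset (Fin 4), #{e ∈ edgesAvoiding A | e ∈ T.sym2} ≤ min 3 (maxClassCard #A) := by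
  decide

set_option maxRecDepth 2000 in
theorem exists_const_of_twelve_le_sum_maxClassCard :
    ∀ p : Fin 4 → Fin 4, 12 ≤ ∑ k, maxClassCard #{i | p i = k} → ∃ k, ∀ i, p i = k := by
  decide

section PairwiseMeeting

variable {A : Finset (Fin 4)} {s : Finset (Sym2 (Fin 6))} (hs : s ⊆ edgesAvoiding A)
  (hmeet : (s : Set (Sym2 (Fin 6))).Pairwise fun e f => ∃ x, x ∈ e ∧ x ∈ f)
include hs hmeet

theorem card_le_maxClassCard : #s ≤ maxClassCard #A := by
  rcases Sym2.exists_forall_mem_or_subset_sym2_of_pairwise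
    (fun e he => not_isDiag_of_mem_edgesAvoiding (hs he)) hmeet with ⟨v, hv⟩ | ⟨T, hT, hsT⟩
  · exact (card_le_card fun e he => mem_filter.mpr ⟨hs he, hv e he⟩).trans
      (card_filter_mem_edgesAvoiding_le v A)
  · exact (card_le_card fun e he => mem_filter.mpr ⟨hs he, hsT e he⟩).trans
      ((card_filter_mem_sym2_edgesAvoiding_le T hT A).trans (min_le_right _ _))

theorem exists_forall_mem_of_three_lt_card (h : 3 < #s) : ∃ v, ∀ e ∈ s, v ∈ e := by
  refine (Sym2.exists_forall_mem_or_subset_sym2_of_pairwise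
    (fun e he => not_isDiag_of_mem_edgesAvoiding (hs he)) hmeet).resolve_right ?_
  rintro ⟨T, hT, hsT⟩
  have := (card_le_card fun e he => mem_filter.mpr ⟨hs he, hsT e he⟩).trans
    ((card_filter_mem_sym2_edgesAvoiding_le T hT A).trans (min_le_left _ _))
  omega

end PairwiseMeeting

section FourColoring

variable (c : octC.Coloring (Fin 4))

noncomputable def edgeColor (e : Sym2 (Fin 6)) : Fin 4 :=
  if h : e ∈ octahedron.edgeSet then c (.inl ⟨e, h⟩) else 0

noncomputable def edgeClass (k : Fin 4) : Finset (Sym2 (Fin 6)) :=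
  {e ∈ octahedron.edgeFinset | edgeColor c e = k}

theorem sum_card_edgeClass : ∑ k, #(edgeClass c k) = 12 := by
  rw [← card_edgeFinset, card_eq_sum_card_fiberwise fun e _ => mem_univ (edgeColor c e)]
  rfl

theorem edgeClass_pairwise_meet (k : Fin 4) :
    (edgeClass c k : Set (Sym2 (Fin 6))).Pairwise fun e f => ∃ x, x ∈ e ∧ x ∈ f := by
  intro e he f hf _
  simp only [edgeClass, coe_filter, Set.mem_ofPred_eq, SimpleGraph.mem_edgeFinset] at he hf
  have hce : c (.inl ⟨e, he.1⟩) = k := by simpa [edgeColor, he.1] using he.2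
  have hcf : c (.inl ⟨f, hf.1⟩) = k := by simpa [edgeColor, hf.1] using hf.2
  by_contra hdisj
  push Not at hdisj
  exact c.valid (show octC.Adj (.inl ⟨e, he.1⟩) (.inl ⟨f, hf.1⟩) from hdisj) (hce.trans hcf.symm)

theorem edgeClass_subset_edgesAvoiding (k : Fin 4) :
    edgeClass c k ⊆ edgesAvoiding {i | c (.inr (facePair i)) = k} := by
  intro e he
  simp only [edgeClass, mem_filter, SimpleGraph.mem_edgeFinset] at he
  have hce : c (.inl ⟨e, he.1⟩) = k := by simpa [edgeColor, he.1] using he.2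
  refine mem_filter.mpr ⟨SimpleGraph.mem_edgeFinset.mpr he.1, fun i hi hei => ?_⟩
  have hadj : octC.Adj (.inl ⟨e, he.1⟩) (.inr (facePair i)) := by
    rcases mem_union.mp hei with h | h
    exacts [⟨_, by simp [facePair], mem_sym2_iff.mp h⟩, ⟨_, by simp [facePair], mem_sym2_iff.mp h⟩]
  exact c.valid hadj (hce.trans (mem_filter.mp hi).2.symm)

theorem exists_edgeClass_eq_empty_and_card_eq_four :
    ∃ k₀, edgeClass c k₀ = ∅ ∧ ∀ k ≠ k₀, #(edgeClass c k) = 4 := by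
  have hle (k : Fin 4) : #(edgeClass c k) ≤ maxClassCard #{i | c (.inr (facePair i)) = k} :=
    card_le_maxClassCard (edgeClass_subset_edgesAvoiding c k) (edgeClass_pairwise_meet c k)
  obtain ⟨k₀, hk₀⟩ := exists_const_of_twelve_le_sum_maxClassCard _
    (sum_card_edgeClass c ▸ sum_le_sum fun k _ => hle k)
  have hempty : edgeClass c k₀ = ∅ := by
    simpa [filter_true_of_mem fun i _ => hk₀ i, maxClassCard] using hle k₀
  refine ⟨k₀, hempty, fun k hk => ?_⟩
  have hsum : ∑ j ∈ univ.erase k₀, #(edgeClass c j) = ∑ j ∈ univ.erase k₀, 4 := by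
    rw [sum_erase _ (by simp [hempty]), sum_card_edgeClass]
    simp
  exact (sum_eq_sum_iff_of_le fun j _ => (hle j).trans (maxClassCard_le_four _)).mp hsum k
    (mem_erase.mpr ⟨hk, mem_univ k⟩)

end FourColoring

theorem octC_not_colorable_four : ¬ octC.Colorable 4 := by
  rintro ⟨c⟩
  obtain ⟨k₀, hempty, hfull⟩ := exists_edgeClass_eq_empty_and_card_eq_four c
  have hstar (k : Fin 4) : ∃ v, k ≠ k₀ → ∀ e ∈ edgeClass c k, v ∈ e := by
    by_cases hk : k = k₀
    · exact ⟨0, fun h => (h hk).elim⟩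
    obtain ⟨v, hv⟩ := exists_forall_mem_of_three_lt_card (edgeClass_subset_edgesAvoiding c k)
      (edgeClass_pairwise_meet c k) (by rw [hfull k hk]; norm_num)
    exact ⟨v, fun _ => hv⟩
  choose center hcenter using hstar
  obtain ⟨e, he, hcover⟩ :=
    exists_edge_disjoint_of_card_le_three ((univ.erase k₀).image center)
      (card_image_le.trans (by simp))
  have hk : edgeColor c e ≠ k₀ := fun h => by
    simpa [hempty] using (show e ∈ edgeClass c k₀ from mem_filter.mpr ⟨he, h⟩)
  exact hcover _ (mem_image_of_mem _ (mem_erase.mpr ⟨hk, mem_univ _⟩))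
    (hcenter _ hk e (mem_filter.mpr ⟨he, rfl⟩))

def starColor (e : Sym2 (Fin 6)) : Fin 4 :=
  if 0 ∈ e then 0 else if 3 ∈ e then 1 else if 1 ∈ e then 2 else 3

theorem exists_mem_mem_of_starColor_eq : ∀ e ∈ octahedron.edgeFinset,
    ∀ f ∈ octahedron.edgeFinset, starColor e = starColor f → ∃ x, x ∈ e ∧ x ∈ f := by
  decide

def fiveColoring : octC.Coloring (Fin 5) :=
  SimpleGraph.Coloring.mk (fun | .inl e => (starColor e).castSucc | .inr _ => Fin.last 4) <| by
    rintro (e | P) (f | Q) hadj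
    · intro heq
      obtain ⟨x, hxe, hxf⟩ := exists_mem_mem_of_starColor_eq e (by simp) f (by simp)
        (Fin.castSucc_injective _ heq)
      exact hadj x hxe hxf
    · exact (Fin.castSucc_lt_last _).ne
    · exact (Fin.castSucc_lt_last _).ne'
    · exact hadj.elim

end Octahedron

/-- `χ(C) = 5`. -/
theorem chromatic_C_eq_five : octC.chromaticNumber = 5 :=
  SimpleGraph.chromaticNumber_eq_iff_colorable_not_colorable.mpr
    ⟨⟨Octahedron.fiveColoring⟩, Octahedron.octC_not_colorable_four⟩
end

section
/- The map sending each line L in ℤ² to its reduction mod 3 is a proper vertex coloring of the graph F' with 4 colors: the reduction mod 3 of any line in ℤ² is a well-defined one-dimensional subspace of (ℤ/3ℤ)², there are exactly 4 such subspaces, and whenever two lines L₁, L₂ in ℤ² satisfy d(L₁,L₂) ∈ {1,2}, their reductions mod 3 are distinct. -/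
/-- A primitive vector of `ℤ²`: coordinates with gcd 1. -/
def Primitive (u : Fin 2 → ℤ) : Prop := Int.gcd (u 0) (u 1) = 1

/-- A line in `ℤ²`: the set of integer multiples of a primitive vector (equivalently, a
rank-one direct summand). -/
def IsLine (L : Submodule ℤ (Fin 2 → ℤ)) : Prop :=
  ∃ u : Fin 2 → ℤ, Primitive u ∧ L = Submodule.span ℤ {u}

/-- The type of lines in `ℤ²`. -/
abbrev Line := {L : Submodule ℤ (Fin 2 → ℤ) // IsLine L}

/-- `|det(u, v)|` for `u, v ∈ ℤ²`. -/
def detAbs (u v : Fin 2 → ℤ) : ℕ := (u 0 * v 1 - u 1 * v 0).natAbs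

/-- The graph `F'`: lines `L₁, L₂` in `ℤ²` are adjacent iff `d(L₁,L₂) ∈ {1,2}`, where
`d` is computed from primitive generators. -/
def Fprime : SimpleGraph Line where
  Adj L₁ L₂ := L₁ ≠ L₂ ∧ ∃ u v : Fin 2 → ℤ, Primitive u ∧ Primitive v ∧
    L₁.1 = Submodule.span ℤ {u} ∧ L₂.1 = Submodule.span ℤ {v} ∧
    (detAbs u v = 1 ∨ detAbs u v = 2)
  symm := ⟨by
    rintro L₁ L₂ ⟨hne, u, v, hu, hv, h1, h2, hd⟩
    refine ⟨hne.symm, v, u, hv, hu, h2, h1, ?_⟩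
    have h : v 0 * u 1 - v 1 * u 0 = -(u 0 * v 1 - u 1 * v 0) := by ring
    rw [detAbs, h, Int.natAbs_neg]
    exact hd⟩
  loopless := ⟨fun L h => h.1 rfl⟩

/-- Coordinatewise reduction mod 3. -/
def red3 (u : Fin 2 → ℤ) : Fin 2 → ZMod 3 := fun i => ((u i : ℤ) : ZMod 3)


/-!
Reduction mod 3 is `ℤ`-linear, so it carries the line `ℤu` into the line `𝔽₃ · ū`, and `ū ≠ 0`
because a primitive vector is not divisible by 3. The one-dimensional subspaces of `𝔽₃²` are the
points of the projective line over `𝔽₃`, of which there are `3 + 1`. Finally, if `ū` and `v̄` span the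
same line then `det(ū, v̄) = 0`, i.e. `3 ∣ det(u, v)`, which rules out `|det(u, v)| ∈ {1, 2}`.
-/

open Submodule

lemma red3_smul (a : ℤ) (v : Fin 2 → ℤ) : red3 (a • v) = (a : ZMod 3) • red3 v := by
  funext i
  simp [red3]

lemma span_red3_le_of_mem_span {u v : Fin 2 → ℤ} (h : u ∈ span ℤ {v}) :
    span (ZMod 3) {red3 u} ≤ span (ZMod 3) {red3 v} := by
  obtain ⟨a, rfl⟩ := mem_span_singleton.1 h
  rw [red3_smul]
  exact span_singleton_smul_le (ZMod 3) (a : ZMod 3) _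

lemma span_red3_eq_of_span_eq {u v : Fin 2 → ℤ} (h : span ℤ {u} = span ℤ {v}) :
    span (ZMod 3) {red3 u} = span (ZMod 3) {red3 v} :=
  le_antisymm (span_red3_le_of_mem_span (h ▸ mem_span_singleton_self u))
    (span_red3_le_of_mem_span (h ▸ mem_span_singleton_self v))

lemma red3_ne_zero_of_primitive {u : Fin 2 → ℤ} (hu : Primitive u) : red3 u ≠ 0 := by
  intro h
  have h0 : (3 : ℤ) ∣ u 0 := (ZMod.intCast_zmod_eq_zero_iff_dvd _ 3).1 (congrFun h 0)
  have h1 : (3 : ℤ) ∣ u 1 := (ZMod.intCast_zmod_eq_zero_iff_dvd _ 3).1 (congrFun h 1)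
  have h3 := Int.dvd_coe_gcd h0 h1
  rw [hu] at h3
  norm_num at h3

lemma det_eq_zero_of_mem_span_singleton {R : Type*} [CommRing R] {x y : Fin 2 → R}
    (h : x ∈ span R {y}) : x 0 * y 1 - x 1 * y 0 = 0 := by
  obtain ⟨c, rfl⟩ := mem_span_singleton.1 h
  simp only [Pi.smul_apply, smul_eq_mul]
  ring

lemma three_dvd_det_of_span_red3_eq {u v : Fin 2 → ℤ}
    (h : span (ZMod 3) {red3 u} = span (ZMod 3) {red3 v}) :
    (3 : ℤ) ∣ u 0 * v 1 - u 1 * v 0 := by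
  refine (ZMod.intCast_zmod_eq_zero_iff_dvd _ 3).1 ?_
  push_cast
  exact det_eq_zero_of_mem_span_singleton (h ▸ mem_span_singleton_self (red3 u))

lemma card_finrank_eq_one_submodule_of_finrank_eq_two {k V : Type*} [DivisionRing k] [Finite k]
    [AddCommGroup V] [Module k V] (h : Module.finrank k V = 2) :
    Nat.card {W : Submodule k V // Module.finrank k W = 1} = Nat.card k + 1 := by
  rw [← Nat.card_congr (Projectivization.equivSubmodule k V),
    Projectivization.card_of_finrank_two k V h]

/-- Reduction mod 3 is a proper 4-coloring of `F'`: the reduction of a line is a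
well-defined one-dimensional subspace of `(ℤ/3ℤ)²`, there are exactly 4 such subspaces,
and lines with `d(L₁,L₂) ∈ {1,2}` have distinct reductions. -/
theorem mod_three_coloring :
    (∀ L : Line, ∀ u v : Fin 2 → ℤ, Primitive u → Primitive v →
        L.1 = Submodule.span ℤ {u} → L.1 = Submodule.span ℤ {v} →
        Submodule.span (ZMod 3) {red3 u} = Submodule.span (ZMod 3) {red3 v}) ∧
    (∀ u : Fin 2 → ℤ, Primitive u →
        Module.finrank (ZMod 3) (Submodule.span (ZMod 3) {red3 u}) = 1) ∧
    Nat.card {W : Submodule (ZMod 3) (Fin 2 → ZMod 3) // Module.finrank (ZMod 3) W = 1}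
      = 4 ∧
    (∀ u v : Fin 2 → ℤ, Primitive u → Primitive v →
        (detAbs u v = 1 ∨ detAbs u v = 2) →
        Submodule.span (ZMod 3) {red3 u} ≠ Submodule.span (ZMod 3) {red3 v}) := by
  refine ⟨fun L u v _ _ hu hv => span_red3_eq_of_span_eq (hu ▸ hv),
    fun u hu => finrank_span_singleton (red3_ne_zero_of_primitive hu), ?_, ?_⟩
  · rw [card_finrank_eq_one_submodule_of_finrank_eq_two (by simp), Nat.card_zmod]
  · intro u v _ _ hdet heq
    have h3 := three_dvd_det_of_span_red3_eq heq
    rw [detAbs] at hdet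
    omega
end

section
/- The chromatic number of the graph F' (lines in ℤ², adjacent when d(L₁,L₂) ∈ {1,2}) equals 4. -/
/-! A line is coloured by the point of `ℙ¹(𝔽₃)` that its primitive generator reduces to. This is
well defined since the generator is unique up to sign and primitive vectors do not vanish mod 3,
and it is proper because adjacent lines have determinant `±1` or `±2`, which is nonzero mod 3.
Conversely the lines through `(1,0)`, `(0,1)`, `(1,1)`, `(1,-1)` are pairwise adjacent. -/

open SimpleGraph

lemma detAbs_self (u : Fin 2 → ℤ) : detAbs u u = 0 := by
  simp [detAbs, mul_comm]

lemma detAbs_units_smul (a b : ℤˣ) (u v : Fin 2 → ℤ) :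
    detAbs (a • u) (b • v) = detAbs u v := by
  have h : (a • u) 0 * (b • v) 1 - (a • u) 1 * (b • v) 0 =
      ((a * b : ℤˣ) : ℤ) * (u 0 * v 1 - u 1 * v 0) := by
    simp only [Pi.smul_apply, Units.smul_def, smul_eq_mul, Units.val_mul]; ring
  rw [detAbs, h, Int.natAbs_mul, Int.units_natAbs, one_mul, detAbs]

lemma detAbs_eq_of_span_eq {u u' v v' : Fin 2 → ℤ}
    (hu : Submodule.span ℤ {u} = Submodule.span ℤ {u'})
    (hv : Submodule.span ℤ {v} = Submodule.span ℤ {v'}) : detAbs u v = detAbs u' v' := by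
  obtain ⟨a, rfl⟩ := Submodule.span_singleton_eq_span_singleton.mp hu
  obtain ⟨b, rfl⟩ := Submodule.span_singleton_eq_span_singleton.mp hv
  exact (detAbs_units_smul a b u v).symm

lemma Primitive.intCast_ne_zero {u : Fin 2 → ℤ} (hu : Primitive u) {n : ℕ} (hn : n ≠ 1) :
    (u 0 : ZMod n) ≠ 0 ∨ (u 1 : ZMod n) ≠ 0 := by
  by_contra! h
  simp only [ZMod.intCast_zmod_eq_zero_iff_dvd] at h
  have hgcd : (n : ℤ) ∣ (u 0).gcd (u 1) := Int.dvd_coe_gcd h.1 h.2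
  rw [show (u 0).gcd (u 1) = 1 from hu] at hgcd
  exact hn (Nat.dvd_one.mp (Int.natCast_dvd_natCast.mp hgcd))

lemma intCast_zmod_ne_zero_of_natAbs_lt {d : ℤ} {n : ℕ} (hd : d ≠ 0) (hdn : d.natAbs < n) :
    (d : ZMod n) ≠ 0 := by
  rw [Ne, ZMod.intCast_zmod_eq_zero_iff_dvd]
  exact fun h ↦ hd (Int.eq_zero_of_dvd_of_natAbs_lt_natAbs h hdn)

namespace Line

def ofPrimitive (u : Fin 2 → ℤ) (hu : Primitive u) : Line :=
  ⟨Submodule.span ℤ {u}, u, hu, rfl⟩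

noncomputable def gen (L : Line) : Fin 2 → ℤ := L.2.choose

lemma primitive_gen (L : Line) : Primitive L.gen := L.2.choose_spec.1

lemma eq_span_gen (L : Line) : L.1 = Submodule.span ℤ {L.gen} := L.2.choose_spec.2

end Line

lemma Fprime.detAbs_gen {L₁ L₂ : Line} (h : Fprime.Adj L₁ L₂) :
    detAbs L₁.gen L₂.gen = 1 ∨ detAbs L₁.gen L₂.gen = 2 := by
  obtain ⟨-, u, v, -, -, hu, hv, hd⟩ := h
  rwa [detAbs_eq_of_span_eq (hu.symm.trans L₁.eq_span_gen) (hv.symm.trans L₂.eq_span_gen)] at hd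

lemma Fprime.adj_ofPrimitive {u v : Fin 2 → ℤ} (hu : Primitive u) (hv : Primitive v)
    (hd : detAbs u v = 1 ∨ detAbs u v = 2) :
    Fprime.Adj (Line.ofPrimitive u hu) (Line.ofPrimitive v hv) := by
  refine ⟨fun h ↦ ?_, u, v, hu, hv, rfl, rfl, hd⟩
  rw [detAbs_eq_of_span_eq rfl (congrArg Subtype.val h).symm, detAbs_self] at hd
  omega

/-- Numbers the points `[1:0], [0:1], [1:1], [1:-1]` of `ℙ¹(𝔽₃)` through their nonzero
representatives `(x, y)`. -/
def p1F3Index (x y : ZMod 3) : Fin 4 :=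
  if y = 0 then 0 else if x = 0 then 1 else if x = y then 2 else 3

lemma p1F3Index_ne {x₀ x₁ y₀ y₁ : ZMod 3} (hx : x₀ ≠ 0 ∨ x₁ ≠ 0) (hy : y₀ ≠ 0 ∨ y₁ ≠ 0)
    (hdet : x₀ * y₁ - x₁ * y₀ ≠ 0) : p1F3Index x₀ x₁ ≠ p1F3Index y₀ y₁ := by
  revert x₀ x₁ y₀ y₁; decide

noncomputable def Fprime.coloringMod3 : Fprime.Coloring (Fin 4) :=
  Coloring.mk (fun L ↦ p1F3Index (L.gen 0) (L.gen 1)) fun {L₁ L₂} hadj ↦ by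
    have hdet : ((L₁.gen 0 * L₂.gen 1 - L₁.gen 1 * L₂.gen 0 : ℤ) : ZMod 3) ≠ 0 := by
      have hd := Fprime.detAbs_gen hadj
      unfold detAbs at hd
      exact intCast_zmod_ne_zero_of_natAbs_lt (by omega) (by omega)
    push_cast at hdet
    exact p1F3Index_ne (L₁.primitive_gen.intCast_ne_zero (by norm_num))
      (L₂.primitive_gen.intCast_ne_zero (by norm_num)) hdet

def cliqueGens : Fin 4 → Fin 2 → ℤ := ![![1, 0], ![0, 1], ![1, 1], ![1, -1]]

lemma primitive_cliqueGens (i : Fin 4) : Primitive (cliqueGens i) := by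
  revert i; unfold Primitive; decide

lemma detAbs_cliqueGens {i j : Fin 4} (hij : i ≠ j) :
    detAbs (cliqueGens i) (cliqueGens j) = 1 ∨ detAbs (cliqueGens i) (cliqueGens j) = 2 := by
  revert i j; decide

/-- `χ(F') = 4`. -/
theorem chromatic_Fprime_eq_four : Fprime.chromaticNumber = 4 := by
  refine le_antisymm ?_ ?_
  · simpa using Fprime.coloringMod3.colorable.chromaticNumber_le
  · refine le_chromaticNumber_of_pairwise_adj (by simp)
      (fun i ↦ Line.ofPrimitive _ (primitive_cliqueGens i)) fun i j hij ↦ ?_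
    exact Fprime.adj_ofPrimitive _ _ (detAbs_cliqueGens hij)
end

section
/- For lines L₁ and L₂ in ℤ², the following are equivalent: (i) L₁ and L₂ have the same reduction mod 3 (i.e., the mod-3 reductions of primitive generators of L₁ and L₂ span the same one-dimensional subspace of (ℤ/3ℤ)²); (ii) there exists a matrix g ∈ SL(2,ℤ) with g ≡ I (mod 3) or g ≡ −I (mod 3) such that g maps L₁ onto L₂. In other words, the color classes of the mod-3 coloring of the lines in ℤ² are exactly the orbits of the congruence subgroup Γ(3) ≤ PSL(2,ℤ). -/
/-!
A primitive vector `u` is the first column of some `A ∈ SL(2,ℤ)`, and `v` that of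
some `B`. If `u ≡ v (mod N)`, then `C = A⁻¹B` fixes `e₁` modulo `N`, so `C ≡ !![1, m; 0, 1]`
and `C T⁻ᵐ ∈ Γ(N)`; its conjugate `B T⁻ᵐ A⁻¹` by `A` lies in the normal subgroup `Γ(N)` and
sends `u` to `v`. The only units of `ZMod 3` are `±1`, so two reductions span the same line iff they
agree up to sign, and a sign is absorbed by replacing the generator `v` of `L₂` by `-v`.
-/

open Matrix MatrixGroups CongruenceSubgroup ModularGroup

theorem primitive_iff_isCoprime {u : Fin 2 → ℤ} : Primitive u ↔ IsCoprime (u 0) (u 1) :=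
  Int.isCoprime_iff_gcd_eq_one.symm

namespace Primitive

variable {u : Fin 2 → ℤ}

theorem neg (hu : Primitive u) : Primitive (-u) := by
  simpa [Primitive] using hu

theorem smul (hu : Primitive u) (g : SL(2, ℤ)) : Primitive (g • u) :=
  primitive_iff_isCoprime.mpr ((primitive_iff_isCoprime.mp hu).mulVecSL g)

end Primitive

theorem red3_neg (u : Fin 2 → ℤ) : red3 (-u) = -red3 u := by
  funext i; simp [red3]

theorem red3_smul_s14 (g : SL(2, ℤ)) (u : Fin 2 → ℤ) :
    red3 (g • u) = (g : Matrix (Fin 2) (Fin 2) ℤ).map (Int.cast : ℤ → ZMod 3) *ᵥ red3 u :=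
  funext fun i ↦ RingHom.map_mulVec (Int.castRingHom (ZMod 3)) _ u i

theorem zmod_three_span_singleton_eq_iff {M : Type*} [AddCommGroup M] [Module (ZMod 3) M]
    {x y : M} :
    Submodule.span (ZMod 3) {x} = Submodule.span (ZMod 3) {y} ↔ y = x ∨ y = -x := by
  have units : ∀ z : (ZMod 3)ˣ, z = 1 ∨ z = -1 := by decide
  rw [Submodule.span_singleton_eq_span_singleton]
  constructor
  · rintro ⟨z, rfl⟩
    rcases units z with rfl | rfl <;> simp
  · rintro (rfl | rfl)
    exacts [⟨1, one_smul _ _⟩, ⟨-1, by simp⟩]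

theorem mem_Gamma_iff_map_eq_one {N : ℕ} {g : SL(2, ℤ)} :
    g ∈ Gamma N ↔ (g : Matrix (Fin 2) (Fin 2) ℤ).map (Int.cast : ℤ → ZMod N) = 1 := by
  simp [Gamma_mem, ← Matrix.ext_iff, Fin.forall_fin_two, one_apply, and_assoc]

theorem mul_T_zpow_mem_Gamma {N : ℕ} {C : SL(2, ℤ)} (h00 : (C 0 0 : ZMod N) = 1)
    (h10 : (C 1 0 : ZMod N) = 0) : C * T ^ (-C 0 1) ∈ Gamma N := by
  have h11 : (C 1 1 : ZMod N) = 1 := by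
    have := congrArg (Int.cast : ℤ → ZMod N) ((det_fin_two C.1).symm.trans C.det_coe)
    push_cast [h00, h10] at this
    simpa using this
  simp [Gamma_mem, coe_T_zpow, mul_apply, Fin.sum_univ_two, h00, h10, h11]

theorem apply_zero_of_mul_eq_of_cast_col_eq {S : Type*} [CommRing S] {A B C : SL(2, ℤ)}
    (hC : A * C = B) (hAB : ∀ i, (B i 0 : S) = A i 0) :
    (C 0 0 : S) = 1 ∧ (C 1 0 : S) = 0 := by
  obtain rfl : C = A⁻¹ * B := eq_inv_mul_of_mul_eq hC
  have hdet := congrArg (Int.cast : ℤ → S) ((det_fin_two A.1).symm.trans A.det_coe)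
  push_cast at hdet
  simp [adjugate_fin_two, mul_apply, Fin.sum_univ_two, hAB]
  exact ⟨by linear_combination hdet, by ring⟩

theorem exists_mem_Gamma_smul_eq {N : ℕ} {u v : Fin 2 → ℤ} (hu : IsCoprime (u 0) (u 1))
    (hv : IsCoprime (v 0) (v 1)) (huv : ∀ i, (u i : ZMod N) = v i) :
    ∃ g ∈ Gamma N, g • u = v := by
  obtain ⟨A, hA0, hA1⟩ := hu.exists_SL2_col 0
  obtain ⟨B, hB0, hB1⟩ := hv.exists_SL2_col 0
  have hA : ∀ i, A i 0 = u i := Fin.forall_fin_two.mpr ⟨hA0, hA1⟩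
  have hB : ∀ i, B i 0 = v i := Fin.forall_fin_two.mpr ⟨hB0, hB1⟩
  obtain ⟨C, hC⟩ : ∃ C, A * C = B := ⟨A⁻¹ * B, mul_inv_cancel_left A B⟩
  obtain ⟨h00, h10⟩ := apply_zero_of_mul_eq_of_cast_col_eq (S := ZMod N) hC fun i ↦ by
    rw [hA, hB, huv]
  refine ⟨B * T ^ (-C 0 1) * A⁻¹, ?_, ?_⟩
  · convert (Gamma_normal N).conj_mem _ (mul_T_zpow_mem_Gamma h00 h10) A using 1
    rw [← hC]; group
  · have hAe : A • Pi.single 0 1 = u := by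
      ext i; simp [Matrix.SpecialLinearGroup.smul_def, hA]
    have hBe : B • Pi.single 0 1 = v := by
      ext i; simp [Matrix.SpecialLinearGroup.smul_def, hB]
    have hTe : T ^ (-C 0 1) • (Pi.single 0 1 : Fin 2 → ℤ) = Pi.single 0 1 := by
      ext i; fin_cases i <;> simp [Matrix.SpecialLinearGroup.smul_def, coe_T_zpow]
    rw [← hAe, ← hBe, smul_smul, inv_mul_cancel_right, mul_smul, hTe]

theorem map_mulVecLin_span_singleton (g : SL(2, ℤ)) (u : Fin 2 → ℤ) :
    (Submodule.span ℤ {u}).map (mulVecLin (g : Matrix (Fin 2) (Fin 2) ℤ)) =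
      Submodule.span ℤ {g • u} := by
  rw [Submodule.map_span, Set.image_singleton, mulVecLin_apply]
  rfl

/-- Two lines in `ℤ²` have the same reduction mod 3 iff some `g ∈ SL(2,ℤ)` with
`g ≡ ±I (mod 3)` maps one onto the other: the color classes of the mod-3 coloring are
exactly the orbits of the congruence subgroup `Γ(3) ≤ PSL(2,ℤ)`. -/
theorem mod_three_classes_are_Gamma3_orbits (L₁ L₂ : Line) :
    (∃ u v : Fin 2 → ℤ, Primitive u ∧ Primitive v ∧
        L₁.1 = Submodule.span ℤ {u} ∧ L₂.1 = Submodule.span ℤ {v} ∧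
        Submodule.span (ZMod 3) {red3 u} = Submodule.span (ZMod 3) {red3 v}) ↔
    (∃ g : Matrix.SpecialLinearGroup (Fin 2) ℤ,
        ((g : Matrix (Fin 2) (Fin 2) ℤ).map (Int.cast : ℤ → ZMod 3) = 1 ∨
          (g : Matrix (Fin 2) (Fin 2) ℤ).map (Int.cast : ℤ → ZMod 3) = -1) ∧
        L₁.1.map (Matrix.mulVecLin (g : Matrix (Fin 2) (Fin 2) ℤ)) = L₂.1) := by
  constructor
  · rintro ⟨u, v, hu, hv, hL₁, hL₂, hspan⟩
    obtain ⟨w, hw, hwv, hred⟩ : ∃ w, Primitive w ∧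
        Submodule.span ℤ {w} = Submodule.span ℤ {v} ∧ red3 u = red3 w := by
      rcases zmod_three_span_singleton_eq_iff.mp hspan with h | h
      · exact ⟨v, hv, rfl, h.symm⟩
      · exact ⟨-v, hv.neg, by rw [← Set.neg_singleton, Submodule.span_neg],
          by rw [red3_neg, h, neg_neg]⟩
    obtain ⟨g, hg, hgu⟩ := exists_mem_Gamma_smul_eq (primitive_iff_isCoprime.mp hu)
      (primitive_iff_isCoprime.mp hw) (congrFun hred)
    refine ⟨g, Or.inl (mem_Gamma_iff_map_eq_one.mp hg), ?_⟩
    rw [hL₁, hL₂, map_mulVecLin_span_singleton, hgu, hwv]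
  · rintro ⟨g, hg, hgL⟩
    obtain ⟨u, hu, hL₁⟩ := L₁.2
    refine ⟨u, g • u, hu, hu.smul g, hL₁, by rw [← hgL, hL₁, map_mulVecLin_span_singleton], ?_⟩
    rw [zmod_three_span_singleton_eq_iff, red3_smul_s14]
    rcases hg with h | h
    · exact Or.inl (by rw [h, one_mulVec])
    · exact Or.inr (by rw [h, neg_mulVec, one_mulVec])
end
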